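/- arXiv:1610.02738 — 5 statements merged into one kernel-verified Lean document; each statement's English description precedes it below -/
import Mathlib

section
/- Assume the binary response model Y = 1{W'θ* ≥ ξ} with Med(ξ | W = w) = 0 for all w in the support of W is correctly specified, and suppose the margin condition holds (with some exponent ϑ ≥ 1 and constant h > 0). Let θ₀ be a maximizer of S(θ) over {−1,1}×Θ_q, assumed to be attained in {−1,1}×Θ_q. Then b* ∈ B_q if and only if W'θ₀ and W'θ* have the same sign with probability 1. -/
open MeasureTheory ProbabilityTheory Real

noncomputable section

/-- The covariate vector `w = (x₀, x̃, z) ∈ ℝ × ℝ^k × ℝ^p`. -/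
abbrev Cov (k p : ℕ) : Type := ℝ × (Fin k → ℝ) × (Fin p → ℝ)

/-- The linear index `w'θ = α·x₀ + x̃'β + z'γ` for `θ = (α, β, γ)`. -/
def dotC {k p : ℕ} (θ : ℝ × (Fin k → ℝ) × (Fin p → ℝ)) (w : Cov k p) : ℝ :=
  θ.1 * w.1 + (∑ j, w.2.1 j * θ.2.1 j) + (∑ j, w.2.2 j * θ.2.2 j)

/-- The binary prediction rule `b_θ(w) = 1{w'θ ≥ 0}`. -/
def bpred {k p : ℕ} (θ : ℝ × (Fin k → ℝ) × (Fin p → ℝ)) (w : Cov k p) : ℝ :=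
  if 0 ≤ dotC θ w then 1 else 0

/-- `ℓ₀`-"norm": the number of nonzero components. -/
def l0 {p : ℕ} (γ : Fin p → ℝ) : ℕ := (Finset.univ.filter fun j => γ j ≠ 0).card

/-- The `ℓ₀`-constrained parameter space `{−1,1} × Θ_q`. -/
def paramSet {k p : ℕ} (Θ : Set ((Fin k → ℝ) × (Fin p → ℝ))) (q : ℕ) :
    Set (ℝ × (Fin k → ℝ) × (Fin p → ℝ)) :=
  {θ | (θ.1 = -1 ∨ θ.1 = 1) ∧ θ.2 ∈ Θ ∧ l0 θ.2.2 ≤ q}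

/-- Population score `S(θ) = P(Y = b_θ(W))`. -/
def score {Ω : Type*} [MeasurableSpace Ω] {k p : ℕ} (μ : Measure Ω)
    (Y : Ω → ℝ) (W : Ω → Cov k p) (θ : ℝ × (Fin k → ℝ) × (Fin p → ℝ)) : ℝ :=
  (μ {ω | Y ω = bpred θ (W ω)}).toReal

/-- `S_q* = sup_{θ ∈ {−1,1}×Θ_q} S(θ)`. -/
def Sqstar {Ω : Type*} [MeasurableSpace Ω] {k p : ℕ} (μ : Measure Ω)
    (Y : Ω → ℝ) (W : Ω → Cov k p) (Θ : Set ((Fin k → ℝ) × (Fin p → ℝ))) (q : ℕ) : ℝ :=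
  sSup (score μ Y W '' paramSet Θ q)

/-- Empirical score `S_n(θ) = n⁻¹ Σᵢ 1{Yᵢ = b_θ(Wᵢ)}`. -/
def empScore {Ω : Type*} {k p n : ℕ} (data : Fin n → Ω → ℝ × Cov k p)
    (θ : ℝ × (Fin k → ℝ) × (Fin p → ℝ)) (ω : Ω) : ℝ :=
  (n : ℝ)⁻¹ * ∑ i, if (data i ω).1 = bpred θ ((data i ω).2) then 1 else 0

/-- `S̃(b) = P(Y = b(W))` for a binary predictor `b`. -/
def Stilde {Ω : Type*} [MeasurableSpace Ω] {k p : ℕ} (μ : Measure Ω)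
    (Y : Ω → ℝ) (W : Ω → Cov k p) (b : Cov k p → ℝ) : ℝ :=
  (μ {ω | Y ω = b (W ω)}).toReal

/-- Bayes predictor `b*(w) = 1{η(w) ≥ 1/2}`. -/
def bstar {k p : ℕ} (η : Cov k p → ℝ) (w : Cov k p) : ℝ :=
  if (1 : ℝ) / 2 ≤ η w then 1 else 0

/-- `r_n = max(s·ln(p ∨ n), 1)`. -/
def rN (s p n : ℕ) : ℝ := max ((s : ℝ) * Real.log (max (p : ℝ) (n : ℝ))) 1

/-- Euclidean norm on the parameter space `ℝ × ℝ^k × ℝ^p`. -/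
def eunorm {k p : ℕ} (θ : ℝ × (Fin k → ℝ) × (Fin p → ℝ)) : ℝ :=
  Real.sqrt (θ.1 ^ 2 + (∑ j, (θ.2.1 j) ^ 2) + ∑ j, (θ.2.2 j) ^ 2)

end

/-!
Under the conditional median restriction, the index rule `b_{θ*}` maximizes `P(Y = b(W))` among
all measurable predictors `b`: on `{W'θ* ≥ 0}` the event `{ξ ≤ 0} ⊆ {Y = 1}` has conditional
probability at least `1/2`, and on `{W'θ* < 0}` so does `{ξ ≥ 0} ⊆ {Y = 0}`. By the margin
condition, any binary predictor scoring at least `S̃(b*)` agrees with `b*` almost surely. Applied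
to `b_{θ*}` this gives `b* = b_{θ*}` a.s.; and if `b* ∈ B_q`, then `S̃(b*) ≤ S(θ₀)`, so also
`b* = b_{θ₀}` a.s. Conversely, if `b_{θ₀} = b_{θ*}` a.s., then `b_{θ₀}` represents `b*` in `B_q`.
-/

open Set

section BinaryRule

variable {k p : ℕ}

lemma measurable_dotC (θ : ℝ × (Fin k → ℝ) × (Fin p → ℝ)) :
    Measurable (dotC θ : Cov k p → ℝ) := by
  unfold dotC; fun_prop

lemma measurable_bpred (θ : ℝ × (Fin k → ℝ) × (Fin p → ℝ)) :
    Measurable (bpred θ : Cov k p → ℝ) :=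
  Measurable.ite (measurableSet_le measurable_const (measurable_dotC θ))
    measurable_const measurable_const

lemma measurable_bstar {η : Cov k p → ℝ} (hη : Measurable η) : Measurable (bstar η) :=
  Measurable.ite (measurableSet_le measurable_const hη) measurable_const measurable_const

lemma bpred_eq_zero_or_one (θ : ℝ × (Fin k → ℝ) × (Fin p → ℝ)) (w : Cov k p) :
    bpred θ w = 0 ∨ bpred θ w = 1 := by
  unfold bpred; split_ifs <;> simp

lemma bstar_eq_zero_or_one (η : Cov k p → ℝ) (w : Cov k p) :
    bstar η w = 0 ∨ bstar η w = 1 := by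
  unfold bstar; split_ifs <;> simp

lemma bpred_eq_bpred_iff (θ θ' : ℝ × (Fin k → ℝ) × (Fin p → ℝ)) (w : Cov k p) :
    bpred θ w = bpred θ' w ↔ (0 ≤ dotC θ w ↔ 0 ≤ dotC θ' w) := by
  unfold bpred; split_ifs <;> grind

end BinaryRule

lemma prob_compl_le_self_of_half_le {α : Type*} [MeasurableSpace α] {ρ : Measure α}
    [IsProbabilityMeasure ρ] {s : Set α} (hs : MeasurableSet s) (h : 1 / 2 ≤ (ρ s).toReal) :
    ρ sᶜ ≤ ρ s := by
  have hc : (ρ sᶜ).toReal = 1 - (ρ s).toReal := probReal_compl_eq_one_sub hs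
  exact (ENNReal.toReal_le_toReal (measure_ne_top _ _) (measure_ne_top _ _)).1 (by linarith)

section Disintegration

variable {Ω X Z : Type*} [MeasurableSpace Ω] [MeasurableSpace X] [MeasurableSpace Z]
  {μ : Measure Ω} {ν : Measure X} {κ : Kernel X Z} {W : Ω → X} {ξ : Ω → Z}

lemma measure_mem_compl_le_of_half_le [IsMarkovKernel κ]
    (hdis : ∀ (A : Set X) (B : Set Z), MeasurableSet A → MeasurableSet B →
      μ {ω | W ω ∈ A ∧ ξ ω ∈ B} = ∫⁻ w in A, κ w B ∂ν)
    {A : Set X} {B : Set Z} (hA : MeasurableSet A) (hB : MeasurableSet B)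
    (hhalf : ∀ᵐ w ∂ν, 1 / 2 ≤ (κ w B).toReal) :
    μ {ω | W ω ∈ A ∧ ξ ω ∈ Bᶜ} ≤ μ {ω | W ω ∈ A ∧ ξ ω ∈ B} := by
  rw [hdis A Bᶜ hA hB.compl, hdis A B hA hB]
  exact lintegral_mono_ae (ae_restrict_of_ae
    (hhalf.mono fun w hw => prob_compl_le_self_of_half_le hB hw))

end Disintegration

lemma measure_eq_comp_le_of_forall_measure_ne_le {Ω X : Type*} [MeasurableSpace Ω]
    [MeasurableSpace X] {μ : Measure Ω} {W : Ω → X} (hW : Measurable W) {Y : Ω → ℝ}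
    {b c : X → ℝ} (hb : Measurable b) (hc : Measurable c)
    (hc_better : ∀ A, MeasurableSet A →
      μ ({ω | Y ω ≠ c (W ω)} ∩ W ⁻¹' A) ≤ μ ({ω | Y ω = c (W ω)} ∩ W ⁻¹' A)) :
    μ {ω | Y ω = b (W ω)} ≤ μ {ω | Y ω = c (W ω)} := by
  set E := {x | b x = c x}
  have hE : MeasurableSet E := measurableSet_eq_fun hb hc
  calc μ {ω | Y ω = b (W ω)}
      ≤ μ ({ω | Y ω = c (W ω)} ∩ W ⁻¹' E ∪ {ω | Y ω ≠ c (W ω)} ∩ W ⁻¹' Eᶜ) := by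
        refine measure_mono fun ω (hω : Y ω = b (W ω)) => ?_
        by_cases hωE : b (W ω) = c (W ω)
        · exact Or.inl ⟨hω.trans hωE, hωE⟩
        · exact Or.inr ⟨fun h => hωE (hω.symm.trans h), hωE⟩
    _ ≤ μ ({ω | Y ω = c (W ω)} ∩ W ⁻¹' E) + μ ({ω | Y ω ≠ c (W ω)} ∩ W ⁻¹' Eᶜ) :=
        measure_union_le _ _
    _ ≤ μ ({ω | Y ω = c (W ω)} ∩ W ⁻¹' E) + μ ({ω | Y ω = c (W ω)} ∩ W ⁻¹' Eᶜ) :=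
        add_le_add_right (hc_better _ hE.compl) _
    _ = μ {ω | Y ω = c (W ω)} := by
        rw [preimage_compl, ← sdiff_eq, measure_inter_add_sdiff _ (hW hE)]

section BinaryResponseModel

variable {Ω : Type*} [MeasurableSpace Ω] {μ : Measure Ω} {k p : ℕ} {Y : Ω → ℝ}
  {W : Ω → Cov k p} {ξ : Ω → ℝ} {θstar : ℝ × (Fin k → ℝ) × (Fin p → ℝ)}
  {κ : Kernel (Cov k p) ℝ} [IsMarkovKernel κ]

lemma measure_ne_bpred_le_measure_eq_bpred (hW : Measurable W)
    (hmodel : ∀ ω, Y ω = if ξ ω ≤ dotC θstar (W ω) then 1 else 0)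
    (hdis : ∀ (A : Set (Cov k p)) (B : Set ℝ), MeasurableSet A → MeasurableSet B →
      μ {ω | W ω ∈ A ∧ ξ ω ∈ B} = ∫⁻ w in A, κ w B ∂(Measure.map W μ))
    (hmed : ∀ᵐ w ∂(Measure.map W μ),
      (1 : ℝ) / 2 ≤ (κ w (Iic 0)).toReal ∧ (1 : ℝ) / 2 ≤ (κ w (Ici 0)).toReal)
    {A : Set (Cov k p)} (hA : MeasurableSet A) :
    μ ({ω | Y ω ≠ bpred θstar (W ω)} ∩ W ⁻¹' A)
      ≤ μ ({ω | Y ω = bpred θstar (W ω)} ∩ W ⁻¹' A) := by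
  have hcorrect : ∀ ω, Y ω = bpred θstar (W ω) ↔
      (ξ ω ≤ dotC θstar (W ω) ↔ 0 ≤ dotC θstar (W ω)) := by
    intro ω; rw [hmodel ω, bpred]; split_ifs <;> grind
  set P := {w : Cov k p | 0 ≤ dotC θstar w}
  have hP : MeasurableSet P := measurableSet_le measurable_const (measurable_dotC θstar)
  calc μ ({ω | Y ω ≠ bpred θstar (W ω)} ∩ W ⁻¹' A)
      = μ ({ω | Y ω ≠ bpred θstar (W ω)} ∩ W ⁻¹' A ∩ W ⁻¹' P)
          + μ (({ω | Y ω ≠ bpred θstar (W ω)} ∩ W ⁻¹' A) \ W ⁻¹' P) :=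
        (measure_inter_add_sdiff _ (hW hP)).symm
    _ ≤ μ {ω | W ω ∈ A ∩ P ∧ ξ ω ∈ (Iic 0)ᶜ} + μ {ω | W ω ∈ (A \ P) ∧ ξ ω ∈ (Ici 0)ᶜ} := by
        gcongr <;>
        · intro ω hω
          simp only [mem_inter_iff, mem_sdiff, mem_ofPred_eq, mem_preimage, mem_compl_iff, mem_Iic,
            mem_Ici, P, ne_eq, hcorrect] at hω ⊢
          grind
    _ ≤ μ {ω | W ω ∈ A ∩ P ∧ ξ ω ∈ Iic 0} + μ {ω | W ω ∈ (A \ P) ∧ ξ ω ∈ Ici 0} :=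
        add_le_add
          (measure_mem_compl_le_of_half_le hdis (hA.inter hP) measurableSet_Iic
            (hmed.mono fun _ h => h.1))
          (measure_mem_compl_le_of_half_le hdis (hA.diff hP) measurableSet_Ici
            (hmed.mono fun _ h => h.2))
    _ ≤ μ ({ω | Y ω = bpred θstar (W ω)} ∩ W ⁻¹' A ∩ W ⁻¹' P)
          + μ (({ω | Y ω = bpred θstar (W ω)} ∩ W ⁻¹' A) \ W ⁻¹' P) := by
        gcongr <;>
        · intro ω hω
          simp only [mem_inter_iff, mem_sdiff, mem_ofPred_eq, mem_preimage, mem_Iic, mem_Ici, P,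
            hcorrect] at hω ⊢
          grind
    _ = μ ({ω | Y ω = bpred θstar (W ω)} ∩ W ⁻¹' A) := measure_inter_add_sdiff _ (hW hP)

lemma Stilde_le_score_of_median [IsFiniteMeasure μ] (hW : Measurable W)
    (hmodel : ∀ ω, Y ω = if ξ ω ≤ dotC θstar (W ω) then 1 else 0)
    (hdis : ∀ (A : Set (Cov k p)) (B : Set ℝ), MeasurableSet A → MeasurableSet B →
      μ {ω | W ω ∈ A ∧ ξ ω ∈ B} = ∫⁻ w in A, κ w B ∂(Measure.map W μ))
    (hmed : ∀ᵐ w ∂(Measure.map W μ),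
      (1 : ℝ) / 2 ≤ (κ w (Iic 0)).toReal ∧ (1 : ℝ) / 2 ≤ (κ w (Ici 0)).toReal)
    {b : Cov k p → ℝ} (hb : Measurable b) :
    Stilde μ Y W b ≤ score μ Y W θstar :=
  ENNReal.toReal_mono (measure_ne_top _ _)
    (measure_eq_comp_le_of_forall_measure_ne_le hW hb (measurable_bpred θstar)
      fun _ hA => measure_ne_bpred_le_measure_eq_bpred hW hmodel hdis hmed hA)

end BinaryResponseModel

section Margin

variable {Ω : Type*} [MeasurableSpace Ω] {μ : Measure Ω} {k p : ℕ} {Y : Ω → ℝ}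
  {W : Ω → Cov k p}

lemma Stilde_congr_ae {b b' : Cov k p → ℝ} (h : ∀ᵐ ω ∂μ, b (W ω) = b' (W ω)) :
    Stilde μ Y W b = Stilde μ Y W b' := by
  unfold Stilde
  congr 1
  refine measure_congr ?_
  filter_upwards [h] with ω hω
  change (Y ω = b (W ω)) = (Y ω = b' (W ω))
  rw [hω]

lemma ae_bstar_eq_of_Stilde_le [IsFiniteMeasure μ] {η : Cov k p → ℝ} {ϑ h : ℝ}
    (hW : Measurable W) (hη : Measurable η) (hh : 0 < h)
    {b : Cov k p → ℝ} (hb : Measurable b) (hbin : ∀ w, b w = 0 ∨ b w = 1)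
    (hmargin : h ^ ϑ * (∫ ω, |bstar η (W ω) - b (W ω)| ∂μ) ^ ϑ
      ≤ Stilde μ Y W (bstar η) - Stilde μ Y W b)
    (hle : Stilde μ Y W (bstar η) ≤ Stilde μ Y W b) :
    ∀ᵐ ω ∂μ, bstar η (W ω) = b (W ω) := by
  have hint : Integrable (fun ω => |bstar η (W ω) - b (W ω)|) μ := by
    refine .of_bound
      (((measurable_bstar hη).comp hW).sub (hb.comp hW)).abs.aestronglyMeasurable 1
      (ae_of_all _ fun ω => ?_)
    rw [Real.norm_eq_abs, abs_abs]
    rcases bstar_eq_zero_or_one η (W ω) with h1 | h1 <;> rcases hbin (W ω) with h2 | h2 <;>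
      norm_num [h1, h2]
  have hzero : ∫ ω, |bstar η (W ω) - b (W ω)| ∂μ = 0 := by
    by_contra hne
    have hpos : 0 < ∫ ω, |bstar η (W ω) - b (W ω)| ∂μ :=
      (integral_nonneg fun _ => abs_nonneg _).lt_of_ne' hne
    have := mul_pos (Real.rpow_pos_of_pos hh ϑ) (Real.rpow_pos_of_pos hpos ϑ)
    linarith
  filter_upwards [(integral_eq_zero_iff_of_nonneg (fun _ => abs_nonneg _) hint).1 hzero]
    with ω hω
  exact sub_eq_zero.1 (abs_eq_zero.1 hω)

end Margin
theorem statement3_general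
    {Ω : Type*} [MeasurableSpace Ω] (μ : Measure Ω) [IsProbabilityMeasure μ]
    (k p q : ℕ) (Θ : Set ((Fin k → ℝ) × (Fin p → ℝ)))
    (Y : Ω → ℝ) (W : Ω → Cov k p) (ξ : Ω → ℝ)
    (θstar θ0 : ℝ × (Fin k → ℝ) × (Fin p → ℝ))
    (η : Cov k p → ℝ) (ϑ h : ℝ)
    (hW : Measurable W)
    -- the binary response model: Y = 1{W'θ* ≥ ξ}, with θ* ∈ {−1,1} × ℝ^{k+p}
    (hmodel : ∀ ω, Y ω = if ξ ω ≤ dotC θstar (W ω) then 1 else 0)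
    -- conditional median restriction: Med(ξ | W = w) = 0
    (κξ : ProbabilityTheory.Kernel (Cov k p) ℝ) (hmk : IsMarkovKernel κξ)
    (hdis : ∀ (A : Set (Cov k p)) (B : Set ℝ), MeasurableSet A → MeasurableSet B →
      μ {ω | W ω ∈ A ∧ ξ ω ∈ B} = ∫⁻ w in A, κξ w B ∂(Measure.map W μ))
    (hmed : ∀ᵐ w ∂(Measure.map W μ),
      (1 : ℝ) / 2 ≤ (κξ w (Set.Iic 0)).toReal ∧ (1 : ℝ) / 2 ≤ (κξ w (Set.Ici 0)).toReal)
    -- η is a measurable version of w ↦ P(Y = 1 | W = w)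
    (hη : Measurable η)
    -- the margin condition with exponent ϑ ≥ 1 and constant h > 0
    (hh : 0 < h)
    (hmargin : ∀ b : Cov k p → ℝ, Measurable b → (∀ w, b w = 0 ∨ b w = 1) →
      h ^ ϑ * (∫ ω, |bstar η (W ω) - b (W ω)| ∂μ) ^ ϑ
        ≤ Stilde μ Y W (bstar η) - Stilde μ Y W b)
    -- θ₀ maximizes S(θ) over {−1,1}×Θ_q, the maximum being attained
    (hθ0 : θ0 ∈ paramSet Θ q)
    (hθ0max : ∀ θ ∈ paramSet Θ q, score μ Y W θ ≤ score μ Y W θ0) :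
    -- conclusion: b* ∈ B_q ↔ W'θ₀ and W'θ* have the same sign with probability 1
    (∃ θ ∈ paramSet Θ q, ∀ᵐ w ∂(Measure.map W μ), bstar η w = bpred θ w)
      ↔ μ {ω | 0 ≤ dotC θ0 (W ω) ↔ 0 ≤ dotC θstar (W ω)} = 1 := by
  have := hmk
  have hbstar : Measurable (bstar η) := measurable_bstar hη
  have hstar : ∀ᵐ ω ∂μ, bstar η (W ω) = bpred θstar (W ω) :=
    ae_bstar_eq_of_Stilde_le hW hη hh (measurable_bpred θstar) (bpred_eq_zero_or_one θstar)
      (hmargin _ (measurable_bpred θstar) (bpred_eq_zero_or_one θstar))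
      (Stilde_le_score_of_median hW hmodel hdis hmed hbstar)
  have hsign : μ {ω | 0 ≤ dotC θ0 (W ω) ↔ 0 ≤ dotC θstar (W ω)} = 1
      ↔ ∀ᵐ ω ∂μ, bpred θ0 (W ω) = bpred θstar (W ω) := by
    simp_rw [← bpred_eq_bpred_iff]
    rw [ae_iff_measure_eq (p := fun ω => bpred θ0 (W ω) = bpred θstar (W ω))
      (measurableSet_eq_fun ((measurable_bpred θ0).comp hW)
        ((measurable_bpred θstar).comp hW)).nullMeasurableSet, measure_univ]
  rw [hsign]
  constructor
  · rintro ⟨θ, hθ, hθ_ae⟩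
    have hθW : ∀ᵐ ω ∂μ, bstar η (W ω) = bpred θ (W ω) := ae_of_ae_map hW.aemeasurable hθ_ae
    have hθ0W : ∀ᵐ ω ∂μ, bstar η (W ω) = bpred θ0 (W ω) :=
      ae_bstar_eq_of_Stilde_le hW hη hh (measurable_bpred θ0) (bpred_eq_zero_or_one θ0)
        (hmargin _ (measurable_bpred θ0) (bpred_eq_zero_or_one θ0))
        ((Stilde_congr_ae hθW).trans_le (hθ0max θ hθ))
    filter_upwards [hθ0W, hstar] with ω h0 h1 using h0 ▸ h1
  · intro hθ0_ae
    refine ⟨θ0, hθ0, (ae_map_iff hW.aemeasurable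
      (measurableSet_eq_fun hbstar (measurable_bpred θ0))).2 ?_⟩
    filter_upwards [hθ0_ae, hstar] with ω h0 h1 using h1.trans h0.symm

/-- Proposition 1 of Chen–Lee: in a correctly specified binary response model
`Y = 1{W'θ* ≥ ξ}` with `Med(ξ|W=w) = 0`, under the margin condition, the Bayes predictor `b*`
belongs to `B_q` if and only if `W'θ₀` and `W'θ*` have the same sign with probability one. -/
theorem statement3
    {Ω : Type*} [MeasurableSpace Ω] (μ : Measure Ω) [IsProbabilityMeasure μ]
    (k p q : ℕ) (Θ : Set ((Fin k → ℝ) × (Fin p → ℝ)))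
    (Y : Ω → ℝ) (W : Ω → Cov k p) (ξ : Ω → ℝ)
    (θstar θ0 : ℝ × (Fin k → ℝ) × (Fin p → ℝ))
    (η : Cov k p → ℝ) (ϑ h : ℝ)
    (hY : Measurable Y) (hW : Measurable W) (hξ : Measurable ξ)
    -- the binary response model: Y = 1{W'θ* ≥ ξ}, with θ* ∈ {−1,1} × ℝ^{k+p}
    (hα : θstar.1 = -1 ∨ θstar.1 = 1)
    (hmodel : ∀ ω, Y ω = if ξ ω ≤ dotC θstar (W ω) then 1 else 0)
    -- conditional median restriction: Med(ξ | W = w) = 0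
    (κξ : ProbabilityTheory.Kernel (Cov k p) ℝ) (hmk : IsMarkovKernel κξ)
    (hdis : ∀ (A : Set (Cov k p)) (B : Set ℝ), MeasurableSet A → MeasurableSet B →
      μ {ω | W ω ∈ A ∧ ξ ω ∈ B} = ∫⁻ w in A, κξ w B ∂(Measure.map W μ))
    (hmed : ∀ᵐ w ∂(Measure.map W μ),
      (1 : ℝ) / 2 ≤ (κξ w (Set.Iic 0)).toReal ∧ (1 : ℝ) / 2 ≤ (κξ w (Set.Ici 0)).toReal)
    -- η is a measurable version of w ↦ P(Y = 1 | W = w)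
    (hη : Measurable η)
    (hver : ∀ A : Set (Cov k p), MeasurableSet A →
      (μ {ω | Y ω = 1 ∧ W ω ∈ A}).toReal = ∫ w in A, η w ∂(Measure.map W μ))
    -- the margin condition with exponent ϑ ≥ 1 and constant h > 0
    (hϑ : 1 ≤ ϑ) (hh : 0 < h)
    (hmargin : ∀ b : Cov k p → ℝ, Measurable b → (∀ w, b w = 0 ∨ b w = 1) →
      h ^ ϑ * (∫ ω, |bstar η (W ω) - b (W ω)| ∂μ) ^ ϑ
        ≤ Stilde μ Y W (bstar η) - Stilde μ Y W b)
    -- θ₀ maximizes S(θ) over {−1,1}×Θ_q, the maximum being attained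
    (hθ0 : θ0 ∈ paramSet Θ q)
    (hθ0max : ∀ θ ∈ paramSet Θ q, score μ Y W θ ≤ score μ Y W θ0) :
    -- conclusion: b* ∈ B_q ↔ W'θ₀ and W'θ* have the same sign with probability 1
    (∃ θ ∈ paramSet Θ q, ∀ᵐ w ∂(Measure.map W μ), bstar η w = bpred θ w)
      ↔ μ {ω | 0 ≤ dotC θ0 (W ω) ↔ 0 ≤ dotC θstar (W ω)} = 1 :=
  statement3_general μ k p q Θ Y W ξ θstar θ0 η ϑ h hW hmodel κξ hmk hdis hmed hη hh hmargin hθ0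
    hθ0max
end

section
/- Assume the binary response model Y = 1{W'θ* ≥ ξ} with Med(ξ | W = w) = 0 for all w in the support of W is correctly specified. Suppose there are universal constants κ₁ > 0 and κ₂ > 0 such that (i) P(|W'θ*| ≥ κ₁) = 1, and (ii) there is an open interval T containing (−κ₁, κ₁) such that the conditional CDF t ↦ P(ξ ≤ t | W = w) has a derivative (with respect to t) bounded below by κ₂ for every t ∈ T and every w in the support of W. Then |2η(w) − 1| ≥ 2κ₁κ₂ for all w in the support of W, where η(w) = P(Y = 1 | W = w). -/
/-!
The law of `(W, ξ)` is `ν ⊗ κ` with `ν` the law of `W`, so `η(w) = F_w(w'θ*)` for `ν`-a.e. `w`,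
where `F_w` is the conditional CDF of `ξ`. If `w'θ* ≥ κ₁`, the mean value theorem on `(0, κ₁)`
gives `F_w(w'θ*) - 1/2 ≥ F_w(κ₁⁻) - F_w(0) ≥ κ₁κ₂`; if `w'θ* ≤ -κ₁`, the same on `(-κ₁, 0)`
gives `1/2 - F_w(w'θ*) ≥ P(ξ < 0 | w) - F_w(-κ₁) ≥ κ₁κ₂`, the median condition bounding
`P(ξ < 0 | w)` by `1/2`.
-/

open MeasureTheory ProbabilityTheory Set Filter Topology

theorem mul_sub_le_of_le_deriv_on_Ioo {F f' : ℝ → ℝ} {a b κ lo hi : ℝ} (hab : a < b)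
    (hderiv : ∀ t ∈ Ioo a b, HasDerivAt F (f' t) t ∧ κ ≤ f' t)
    (hlo : ∀ u ∈ Ioo a b, lo ≤ F u) (hhi : ∀ v ∈ Ioo a b, F v ≤ hi) :
    κ * (b - a) ≤ hi - lo := by
  have hMVT : ∀ u ∈ Ioo a b, ∀ v ∈ Ioo a b, u ≤ v → κ * (v - u) ≤ F v - F u := by
    refine (convex_Ioo a b).mul_sub_le_image_sub_of_le_deriv
      (fun t ht => (hderiv t ht).1.continuousAt.continuousWithinAt)
      (fun t ht => ?_) (fun t ht => ?_)
    · rw [interior_Ioo] at ht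
      exact (hderiv t ht).1.differentiableAt.differentiableWithinAt
    · rw [interior_Ioo] at ht
      exact (hderiv t ht).1.deriv ▸ (hderiv t ht).2
  -- shrink `[a, b]` to `[a + ε, b - ε]` and let `ε → 0`
  have hshrunk : ∀ ε ∈ Ioo 0 ((b - a) / 2), κ * (b - a - 2 * ε) ≤ hi - lo := by
    rintro ε ⟨hε₀, hε⟩
    have hu : a + ε ∈ Ioo a b := ⟨by linarith, by linarith⟩
    have hv : b - ε ∈ Ioo a b := ⟨by linarith, by linarith⟩
    calc κ * (b - a - 2 * ε) = κ * ((b - ε) - (a + ε)) := by ring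
      _ ≤ F (b - ε) - F (a + ε) := hMVT _ hu _ hv (by linarith)
      _ ≤ hi - lo := sub_le_sub (hhi _ hv) (hlo _ hu)
  have hlim : Tendsto (fun ε => κ * (b - a - 2 * ε)) (𝓝[>] 0) (𝓝 (κ * (b - a))) := by
    have : Continuous fun ε : ℝ => κ * (b - a - 2 * ε) := by fun_prop
    simpa using (this.tendsto 0).mono_left nhdsWithin_le_nhds
  exact le_of_tendsto hlim (eventually_of_mem (Ioo_mem_nhdsGT (by linarith)) hshrunk)

theorem le_abs_two_mul_measureReal_Iic_sub_one {P : Measure ℝ} [IsProbabilityMeasure P]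
    {κ₁ κ₂ x : ℝ} {d : ℝ → ℝ} (hκ₁ : 0 < κ₁)
    (hmed : 1 / 2 ≤ P.real (Iic 0) ∧ 1 / 2 ≤ P.real (Ici 0))
    (hderiv : ∀ t ∈ Ioo (-κ₁) κ₁, HasDerivAt (fun u => P.real (Iic u)) (d t) t ∧ κ₂ ≤ d t)
    (hx : κ₁ ≤ |x|) :
    2 * κ₁ * κ₂ ≤ |2 * P.real (Iic x) - 1| := by
  have hmono : Monotone fun u => P.real (Iic u) := fun u v huv =>
    measureReal_mono (Iic_subset_Iic.mpr huv)
  rcases le_abs'.mp hx with hneg | hpos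
  · have hIio : P.real (Iio 0) ≤ 1 / 2 := by
      rw [← compl_Ici, probReal_compl_eq_one_sub measurableSet_Ici]
      linarith [hmed.2]
    have := mul_sub_le_of_le_deriv_on_Ioo (F := fun u => P.real (Iic u)) (neg_lt_zero.mpr hκ₁)
      (fun t ht => hderiv t ⟨ht.1, ht.2.trans hκ₁⟩)
      (fun u hu => hmono (hneg.trans hu.1.le))
      (fun v hv => (measureReal_mono (Iic_subset_Iio.mpr hv.2)).trans hIio)
    refine le_trans ?_ (neg_le_abs _)
    linarith
  · have := mul_sub_le_of_le_deriv_on_Ioo (F := fun u => P.real (Iic u)) hκ₁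
      (fun t ht => hderiv t ⟨(neg_neg_of_pos hκ₁).trans ht.1, ht.2⟩)
      (fun u hu => hmed.1.trans (hmono hu.1.le))
      (fun v hv => hmono (hv.2.le.trans hpos))
    refine le_trans ?_ (le_abs_self _)
    linarith

section JointLaw

variable {Ω α β : Type*} [MeasurableSpace Ω] [MeasurableSpace α] [MeasurableSpace β]
  {μ : Measure Ω} {X : Ω → α}

theorem map_prodMk_eq_compProd_of_measure_inter_preimage [IsFiniteMeasure μ] {Z : Ω → β}
    (hX : Measurable X) (hZ : Measurable Z) (κ : Kernel α β) [IsSFiniteKernel κ]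
    (h : ∀ (A : Set α) (B : Set β), MeasurableSet A → MeasurableSet B →
      μ {ω | X ω ∈ A ∧ Z ω ∈ B} = ∫⁻ a in A, κ a B ∂(μ.map X)) :
    μ.map (fun ω => (X ω, Z ω)) = μ.map X ⊗ₘ κ := by
  refine Measure.ext_prod fun {A B} hA hB => ?_
  rw [Measure.map_apply (hX.prodMk hZ) (hA.prod hB), Measure.compProd_apply_prod hA hB,
    ← h A B hA hB]
  rfl

theorem ProbabilityTheory.Kernel.measurable_apply_Iic_comp (κ : Kernel α ℝ) [IsSFiniteKernel κ]
    {f : α → ℝ} (hf : Measurable f) : Measurable fun a => κ a (Iic (f a)) := by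
  simpa [Iic_def] using
    κ.measurable_kernel_prodMk_left (measurableSet_le measurable_snd (hf.comp measurable_fst))

theorem measure_le_comp_and_mem_eq_setLIntegral {Z : Ω → ℝ} {κ : Kernel α ℝ}
    [IsSFiniteKernel κ] [SFinite (μ.map X)] (hX : Measurable X) (hZ : Measurable Z)
    (hlaw : μ.map (fun ω => (X ω, Z ω)) = μ.map X ⊗ₘ κ)
    {f : α → ℝ} (hf : Measurable f) {A : Set α} (hA : MeasurableSet A) :
    μ {ω | Z ω ≤ f (X ω) ∧ X ω ∈ A} = ∫⁻ a in A, κ a (Iic (f a)) ∂(μ.map X) := by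
  have hS : MeasurableSet {p : α × ℝ | p.2 ≤ f p.1 ∧ p.1 ∈ A} :=
    (measurableSet_le measurable_snd (hf.comp measurable_fst)).inter (measurable_fst hA)
  change μ ((fun ω => (X ω, Z ω)) ⁻¹' {p | p.2 ≤ f p.1 ∧ p.1 ∈ A}) = _
  rw [← lintegral_indicator hA, ← Measure.map_apply (hX.prodMk hZ) hS, hlaw,
    Measure.compProd_apply hS]
  congr 1 with a
  by_cases ha : a ∈ A <;> simp [ha, indicator, Iic_def]

theorem measureReal_le_comp_and_mem_eq_setIntegral {Z : Ω → ℝ} {κ : Kernel α ℝ}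
    [IsFiniteKernel κ] [SFinite (μ.map X)] (hX : Measurable X) (hZ : Measurable Z)
    (hlaw : μ.map (fun ω => (X ω, Z ω)) = μ.map X ⊗ₘ κ)
    {f : α → ℝ} (hf : Measurable f) {A : Set α} (hA : MeasurableSet A) :
    μ.real {ω | Z ω ≤ f (X ω) ∧ X ω ∈ A} = ∫ a in A, (κ a).real (Iic (f a)) ∂(μ.map X) := by
  rw [measureReal_def, measure_le_comp_and_mem_eq_setLIntegral hX hZ hlaw hf hA,
    ← integral_toReal (κ.measurable_apply_Iic_comp hf).aemeasurable
      (ae_of_all _ fun a => measure_lt_top _ _)]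
  rfl

end JointLaw

theorem Measurable.ae_eq_of_forall_setIntegral_eq {α : Type*} [MeasurableSpace α]
    {ν : Measure α} [IsFiniteMeasure ν] {f g : α → ℝ} (hf : Measurable f) (hg : Integrable g ν)
    (h : ∀ A, MeasurableSet A → ∫ x in A, f x ∂ν = ∫ x in A, g x ∂ν) : f =ᵐ[ν] g := by
  -- `f` need not be integrable, but it is on each of its sublevel sets `{|f| ≤ n}`
  have hB : ∀ n : ℕ, MeasurableSet {x | |f x| ≤ n} := fun n =>
    measurableSet_le hf.abs measurable_const
  have htrunc : ∀ n : ℕ, ∀ᵐ x ∂ν, |f x| ≤ n → f x = g x := by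
    intro n
    refine (ae_restrict_iff' (hB n)).1 ?_
    have hfn : Integrable f (ν.restrict {x | |f x| ≤ n}) :=
      Integrable.of_bound hf.aestronglyMeasurable n
        ((ae_restrict_iff' (hB n)).2 (ae_of_all _ fun x hx => hx))
    refine ae_eq_of_forall_setIntegral_eq_of_sigmaFinite
      (fun s _ _ => hfn.integrableOn) (fun s _ _ => hg.restrict.integrableOn) fun s hs _ => ?_
    rw [Measure.restrict_restrict hs]
    exact h _ (hs.inter (hB n))
  filter_upwards [ae_all_iff.2 htrunc] with x hx
  obtain ⟨n, hn⟩ := exists_nat_ge |f x|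
  exact hx n hn

theorem statement4_general
    {Ω : Type*} [MeasurableSpace Ω] (μ : Measure Ω) [IsProbabilityMeasure μ]
    (m : ℕ) (Y : Ω → ℝ) (W : Ω → Fin m → ℝ) (ξ : Ω → ℝ)
    (θstar : Fin m → ℝ) (η : (Fin m → ℝ) → ℝ) (κ₁ κ₂ : ℝ)
    (hW : Measurable W) (hξ : Measurable ξ) (hη : Measurable η)
    -- the binary response model: Y = 1{W'θ* ≥ ξ}
    (hmodel : ∀ ω, Y ω = if ξ ω ≤ ∑ j, W ω j * θstar j then 1 else 0)
    -- conditional distribution of ξ given W, with median zero: Med(ξ | W = w) = 0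
    (κξ : ProbabilityTheory.Kernel (Fin m → ℝ) ℝ) (hmk : IsMarkovKernel κξ)
    (hdis : ∀ (A : Set (Fin m → ℝ)) (B : Set ℝ), MeasurableSet A → MeasurableSet B →
      μ {ω | W ω ∈ A ∧ ξ ω ∈ B} = ∫⁻ w in A, κξ w B ∂(Measure.map W μ))
    (hmed : ∀ᵐ w ∂(Measure.map W μ),
      (1 : ℝ) / 2 ≤ (κξ w (Set.Iic 0)).toReal ∧ (1 : ℝ) / 2 ≤ (κξ w (Set.Ici 0)).toReal)
    -- η is a measurable version of w ↦ P(Y = 1 | W = w)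
    (hver : ∀ A : Set (Fin m → ℝ), MeasurableSet A →
      (μ {ω | Y ω = 1 ∧ W ω ∈ A}).toReal = ∫ w in A, η w ∂(Measure.map W μ))
    (hκ₁ : 0 < κ₁)
    -- (i) P(|W'θ*| ≥ κ₁) = 1
    (hi : μ {ω | κ₁ ≤ |∑ j, W ω j * θstar j|} = 1)
    -- (ii) the conditional CDF has derivative ≥ κ₂ on an open interval T ⊇ (−κ₁, κ₁)
    (hii : ∃ T : Set ℝ, IsOpen T ∧ Set.Ioo (-κ₁) κ₁ ⊆ T ∧
      ∃ d : (Fin m → ℝ) → ℝ → ℝ, ∀ᵐ w ∂(Measure.map W μ), ∀ t ∈ T,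
        HasDerivAt (fun u : ℝ => (κξ w (Set.Iic u)).toReal) (d w t) t ∧ κ₂ ≤ d w t) :
    -- conclusion: |2η(w) − 1| ≥ 2κ₁κ₂ for (almost) all w in the support of W
    ∀ᵐ w ∂(Measure.map W μ), 2 * κ₁ * κ₂ ≤ |2 * η w - 1| := by
  have hindex : Measurable fun w : Fin m → ℝ => ∑ j, w j * θstar j := by fun_prop
  have hlaw := map_prodMk_eq_compProd_of_measure_inter_preimage hW hξ κξ hdis
  have hη_eq : η =ᵐ[μ.map W] fun w => (κξ w).real (Iic (∑ j, w j * θstar j)) := by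
    refine hη.ae_eq_of_forall_setIntegral_eq (Integrable.of_bound
      (κξ.measurable_apply_Iic_comp hindex).ennreal_toReal.aestronglyMeasurable 1
      (ae_of_all _ fun w => by
        rw [Real.norm_of_nonneg measureReal_nonneg]; exact measureReal_le_one)) fun A hA => ?_
    rw [← hver A hA, ← measureReal_le_comp_and_mem_eq_setIntegral hW hξ hlaw hindex hA,
      measureReal_def]
    congr 2 with ω
    simp [hmodel]
  have hindex_ge : ∀ᵐ w ∂(μ.map W), κ₁ ≤ |∑ j, w j * θstar j| := by
    rw [ae_map_iff hW.aemeasurable (measurableSet_le measurable_const hindex.abs),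
      ae_iff_measure_eq (measurableSet_le measurable_const (by fun_prop)).nullMeasurableSet,
      hi, measure_univ]
  obtain ⟨T, -, hT, d, hd⟩ := hii
  filter_upwards [hη_eq, hmed, hindex_ge, hd] with w hηw hmedw hindexw hdw
  rw [hηw]
  exact le_abs_two_mul_measureReal_Iic_sub_one hκ₁ hmedw (fun t ht => hdw t (hT ht)) hindexw

/-- Proposition 2 of Chen–Lee: in a correctly specified binary response model
`Y = 1{W'θ* ≥ ξ}` with conditional median zero, if (i) `|W'θ*| ≥ κ₁` with probability one and
(ii) the conditional CDF `t ↦ P(ξ ≤ t | W = w)` has a derivative bounded below by `κ₂` on an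
open interval `T ⊇ (−κ₁, κ₁)`, then `|2η(w) − 1| ≥ 2κ₁κ₂` on the support of `W`. -/
theorem statement4
    {Ω : Type*} [MeasurableSpace Ω] (μ : Measure Ω) [IsProbabilityMeasure μ]
    (m : ℕ) (Y : Ω → ℝ) (W : Ω → Fin m → ℝ) (ξ : Ω → ℝ)
    (θstar : Fin m → ℝ) (η : (Fin m → ℝ) → ℝ) (κ₁ κ₂ : ℝ)
    (hY : Measurable Y) (hW : Measurable W) (hξ : Measurable ξ) (hη : Measurable η)
    -- the binary response model: Y = 1{W'θ* ≥ ξ}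
    (hmodel : ∀ ω, Y ω = if ξ ω ≤ ∑ j, W ω j * θstar j then 1 else 0)
    -- conditional distribution of ξ given W, with median zero: Med(ξ | W = w) = 0
    (κξ : ProbabilityTheory.Kernel (Fin m → ℝ) ℝ) (hmk : IsMarkovKernel κξ)
    (hdis : ∀ (A : Set (Fin m → ℝ)) (B : Set ℝ), MeasurableSet A → MeasurableSet B →
      μ {ω | W ω ∈ A ∧ ξ ω ∈ B} = ∫⁻ w in A, κξ w B ∂(Measure.map W μ))
    (hmed : ∀ᵐ w ∂(Measure.map W μ),
      (1 : ℝ) / 2 ≤ (κξ w (Set.Iic 0)).toReal ∧ (1 : ℝ) / 2 ≤ (κξ w (Set.Ici 0)).toReal)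
    -- η is a measurable version of w ↦ P(Y = 1 | W = w)
    (hver : ∀ A : Set (Fin m → ℝ), MeasurableSet A →
      (μ {ω | Y ω = 1 ∧ W ω ∈ A}).toReal = ∫ w in A, η w ∂(Measure.map W μ))
    (hκ₁ : 0 < κ₁) (hκ₂ : 0 < κ₂)
    -- (i) P(|W'θ*| ≥ κ₁) = 1
    (hi : μ {ω | κ₁ ≤ |∑ j, W ω j * θstar j|} = 1)
    -- (ii) the conditional CDF has derivative ≥ κ₂ on an open interval T ⊇ (−κ₁, κ₁)
    (hii : ∃ T : Set ℝ, IsOpen T ∧ Set.Ioo (-κ₁) κ₁ ⊆ T ∧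
      ∃ d : (Fin m → ℝ) → ℝ → ℝ, ∀ᵐ w ∂(Measure.map W μ), ∀ t ∈ T,
        HasDerivAt (fun u : ℝ => (κξ w (Set.Iic u)).toReal) (d w t) t ∧ κ₂ ≤ d w t) :
    -- conclusion: |2η(w) − 1| ≥ 2κ₁κ₂ for (almost) all w in the support of W
    ∀ᵐ w ∂(Measure.map W μ), 2 * κ₁ * κ₂ ≤ |2 * η w - 1| :=
  statement4_general μ m Y W ξ θstar η κ₁ κ₂ hW hξ hη hmodel κξ hmk hdis hmed hver hκ₁ hi hii
end

section
/- Let (Y,W) be a random pair with Y ∈ {0,1}, η(w) = P(Y=1|W=w), b*(w) = 1{η(w) ≥ 1/2}, and S̃(b) = P(Y = b(W)). Suppose there exist universal positive constants C and α such that P(|η(W) − 1/2| ≤ t) ≤ C·t^α for all t > 0. Then the margin condition holds with exponent ϑ = (1+α)/α: there exists h > 0 such that S̃(b*) − S̃(b) ≥ h^ϑ·(E|b*(W) − b(W)|)^ϑ for every measurable binary predictor b : W → {0,1}. -/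
/-!
Under the law `ν` of `W`, `P(Y = b(W)) = ∫ (if b = 1 then η else 1 - η) dν`, so the excess
`S̃(b*) - S̃(b)` equals `2 ∫ |b* - b| |η - 1/2| dν`. Off the set `{|η - 1/2| ≤ t}`, whose mass is at
most `C t^α`, the integrand is at least `2t |b* - b|`; hence the excess is at least
`2t (E|b* - b| - C t^α)`, and the choice `C t^α = E|b* - b| / 2` gives
`(2C)^(-1/α) (E|b* - b|)^((1+α)/α)`.
-/

open MeasureTheory ProbabilityTheory Real
open Set

section

variable {Ω E : Type*} [MeasurableSpace Ω] [MeasurableSpace E]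

theorem ae_mem_Icc_of_forall_setIntegral_mem_Icc {ν : Measure E} [IsFiniteMeasure ν]
    {f : E → ℝ} (hf : Measurable f)
    (h : ∀ A, MeasurableSet A → 0 ≤ ∫ w in A, f w ∂ν ∧ ∫ w in A, f w ∂ν ≤ ν.real A) :
    ∀ᵐ w ∂ν, f w ∈ Icc 0 1 := by
  -- `f` need not be integrable, so argue on the sets where it is bounded
  set B : ℕ → Set E := fun n => f ⁻¹' Icc (-n) n
  have hB : ∀ n, MeasurableSet (B n) := fun n => hf measurableSet_Icc
  have hcover : (⋃ n, B n) = univ := by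
    refine eq_univ_of_forall fun w => mem_iUnion.2 ?_
    obtain ⟨n, hn⟩ := exists_nat_ge |f w|
    exact ⟨n, abs_le.1 hn⟩
  rw [← Measure.restrict_univ (μ := ν), ← hcover, ae_restrict_iUnion_iff]
  intro n
  have hfi : Integrable f (ν.restrict (B n)) :=
    .of_mem_Icc (-n) n hf.aemeasurable ((ae_restrict_iff' (hB n)).2 (.of_forall fun _ hw => hw))
  have hsub : ∀ s, MeasurableSet s → ∫ w in s, f w ∂ν.restrict (B n) = ∫ w in s ∩ B n, f w ∂ν :=
    fun s hs => by rw [Measure.restrict_restrict hs]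
  have h0 := ae_nonneg_of_forall_setIntegral_nonneg hfi fun s hs _ => by
    rw [hsub s hs]; exact (h _ (hs.inter (hB n))).1
  have h1 := ae_le_of_forall_setIntegral_le hfi (integrable_const 1) fun s hs _ => by
    rw [hsub s hs, setIntegral_const, smul_eq_mul, mul_one, measureReal_restrict_apply hs]
    exact (h _ (hs.inter (hB n))).2
  filter_upwards [h0, h1] with w hw0 hw1 using ⟨hw0, hw1⟩

theorem mul_sub_measureReal_le_integral_mul {ν : Measure E} [IsFiniteMeasure ν]
    {g φ : E → ℝ} (hg : Measurable g) (hg01 : ∀ w, g w ∈ Icc 0 1) (hφ : Measurable φ)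
    (hφi : Integrable φ ν) (hφ0 : ∀ w, 0 ≤ φ w) {t : ℝ} (ht : 0 ≤ t) :
    t * (∫ w, g w ∂ν - ν.real {w | φ w ≤ t}) ≤ ∫ w, g w * φ w ∂ν := by
  have hM : MeasurableSet {w | φ w ≤ t} := measurableSet_le hφ measurable_const
  have hgi : Integrable g ν := .of_mem_Icc 0 1 hg.aemeasurable (.of_forall hg01)
  have hMi : Integrable ({w | φ w ≤ t}.indicator 1) ν := (integrable_const (1 : ℝ)).indicator hM
  rw [← integral_indicator_one hM, ← integral_sub hgi hMi, ← integral_const_mul]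
  refine integral_mono ((hgi.sub hMi).const_mul t)
    (hφi.bdd_mul hg.aestronglyMeasurable (c := 1) (.of_forall fun w => ?_)) fun w => ?_
  · rw [Real.norm_eq_abs, abs_le]; exact ⟨by linarith [(hg01 w).1], (hg01 w).2⟩
  · obtain ⟨hg0, hg1⟩ := hg01 w
    by_cases hw : φ w ≤ t
    · rw [indicator_of_mem (show w ∈ {w | φ w ≤ t} from hw), Pi.one_apply]
      nlinarith [hφ0 w]
    · rw [indicator_of_notMem (show w ∉ {w | φ w ≤ t} from hw)]
      nlinarith

theorem rpow_mul_rpow_le_of_forall_mul_sub_le {p C α D : ℝ} (hp : 0 ≤ p) (hC : 0 < C)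
    (hα : 0 < α) (hD : 0 ≤ D) (h : ∀ t, 0 < t → t * (p - C * t ^ α) ≤ D) :
    (2 * C) ^ (-α⁻¹) * p ^ ((1 + α) / α) ≤ 2 * D := by
  rcases hp.eq_or_lt with rfl | hp
  · rw [zero_rpow (by positivity), mul_zero]; linarith
  set t := (p / (2 * C)) ^ α⁻¹ with ht_def
  have htα : C * t ^ α = p / 2 := by
    rw [rpow_inv_rpow (by positivity) hα.ne']; field_simp
  have hval : (2 * C) ^ (-α⁻¹) * p ^ ((1 + α) / α) = t * p := by
    rw [show (1 + α) / α = α⁻¹ + 1 by field_simp, rpow_add hp, rpow_one, ht_def,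
      div_rpow hp.le (by positivity), rpow_neg (by positivity)]
    ring
  have := h t (by positivity)
  rw [htα] at this
  linarith

theorem ite_sub_ite_eq_two_mul_abs_mul_abs {x c : ℝ} (hc : c = 0 ∨ c = 1) :
    (if (if 1 / 2 ≤ x then (1 : ℝ) else 0) = 1 then x else 1 - x) - (if c = 1 then x else 1 - x)
      = 2 * (|(if 1 / 2 ≤ x then (1 : ℝ) else 0) - c| * |x - 1 / 2|) := by
  by_cases hx : 1 / 2 ≤ x
  · rw [abs_of_nonneg (by linarith : 0 ≤ x - 1 / 2)]
    rcases hc with rfl | rfl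
    · norm_num [hx]; ring
    · norm_num [hx]
  · rw [abs_of_neg (by linarith : x - 1 / 2 < 0)]
    rcases hc with rfl | rfl
    · norm_num [hx]
    · norm_num [hx]; ring

def IsCondProbVersion (μ : Measure Ω) (Y : Ω → ℝ) (W : Ω → E) (η : E → ℝ) : Prop :=
  ∀ A : Set E, MeasurableSet A →
    (μ {ω | Y ω = 1 ∧ W ω ∈ A}).toReal = ∫ w in A, η w ∂(Measure.map W μ)

namespace IsCondProbVersion

variable {μ : Measure Ω} [IsFiniteMeasure μ] {Y : Ω → ℝ} {W : Ω → E} {η : E → ℝ}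

theorem ae_mem_Icc (hcp : IsCondProbVersion μ Y W η) (hW : Measurable W) (hη : Measurable η) :
    ∀ᵐ w ∂μ.map W, η w ∈ Icc 0 1 :=
  ae_mem_Icc_of_forall_setIntegral_mem_Icc hη fun A hA => by
    rw [← hcp A hA, map_measureReal_apply hW hA]
    exact ⟨ENNReal.toReal_nonneg, measureReal_mono fun ω hω => hω.2⟩

theorem measureReal_comp_eq_eq_integral (hcp : IsCondProbVersion μ Y W η) (hY : Measurable Y)
    (hW : Measurable W) (hY01 : ∀ ω, Y ω = 0 ∨ Y ω = 1) (hηi : Integrable η (μ.map W))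
    {b : E → ℝ} (hb : Measurable b) (hb01 : ∀ w, b w = 0 ∨ b w = 1) :
    μ.real {ω | Y ω = b (W ω)} = ∫ w, (if b w = 1 then η w else 1 - η w) ∂μ.map W := by
  classical
  set A := b ⁻¹' {1}
  have hA : MeasurableSet A := hb (measurableSet_singleton 1)
  have hlevel : ∀ y (S : Set E), MeasurableSet S → MeasurableSet {ω | Y ω = y ∧ W ω ∈ S} :=
    fun y S hS => (hY (measurableSet_singleton y)).inter (hW hS)
  have hdisj : ∀ S S' : Set E, Disjoint {ω | Y ω = 1 ∧ W ω ∈ S} {ω | Y ω = 0 ∧ W ω ∈ S'} :=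
    fun S S' => disjoint_left.2 fun ω h h' => one_ne_zero (h.1.symm.trans h'.1)
  have hsuccess : {ω | Y ω = b (W ω)} = {ω | Y ω = 1 ∧ W ω ∈ A} ∪ {ω | Y ω = 0 ∧ W ω ∈ Aᶜ} := by
    ext ω
    rcases hY01 ω with h | h <;> rcases hb01 (W ω) with h' | h' <;> simp [A, h, h']
  have hfiber : W ⁻¹' Aᶜ = {ω | Y ω = 1 ∧ W ω ∈ Aᶜ} ∪ {ω | Y ω = 0 ∧ W ω ∈ Aᶜ} := by
    ext ω
    rcases hY01 ω with h | h <;> simp [h]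
  have hzero : μ.real {ω | Y ω = 0 ∧ W ω ∈ Aᶜ} = ∫ w in Aᶜ, (1 - η w) ∂μ.map W := by
    have := congrArg μ.real hfiber
    rw [← map_measureReal_apply hW hA.compl, measureReal_union (hdisj _ _) (hlevel 0 _ hA.compl)]
      at this
    rw [integral_sub (integrable_const 1) hηi.integrableOn, setIntegral_const, smul_eq_mul,
      mul_one, ← hcp _ hA.compl, ← measureReal_def]
    linarith
  have hite : (fun w => if b w = 1 then η w else 1 - η w) = A.piecewise η (fun w => 1 - η w) := by
    ext w; by_cases h : b w = 1 <;> simp [A, h, Set.piecewise]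
  rw [hsuccess, measureReal_union (hdisj _ _) (hlevel 0 _ hA.compl), hzero, hite,
    integral_piecewise (g := fun w => 1 - η w) hA hηi.integrableOn
      ((integrable_const 1).sub hηi).integrableOn, ← hcp A hA, measureReal_def]

theorem measureReal_sub_measureReal_eq_integral (hcp : IsCondProbVersion μ Y W η)
    (hY : Measurable Y) (hW : Measurable W) (hη : Measurable η) (hY01 : ∀ ω, Y ω = 0 ∨ Y ω = 1)
    {b : E → ℝ} (hb : Measurable b) (hb01 : ∀ w, b w = 0 ∨ b w = 1) :
    μ.real {ω | Y ω = (if (1 : ℝ) / 2 ≤ η (W ω) then 1 else 0)} - μ.real {ω | Y ω = b (W ω)}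
      = 2 * ∫ w, |(if (1 : ℝ) / 2 ≤ η w then 1 else 0) - b w| * |η w - 1 / 2| ∂μ.map W := by
  have hη01 := hcp.ae_mem_Icc hW hη
  have hηi : Integrable η (μ.map W) := .of_mem_Icc 0 1 hη.aemeasurable hη01
  have hint : ∀ c : E → ℝ, Measurable c →
      Integrable (fun w => if c w = 1 then η w else 1 - η w) (μ.map W) := fun c hc =>
    .of_mem_Icc 0 1
      (Measurable.ite (hc (measurableSet_singleton 1)) hη (measurable_const.sub hη)).aemeasurable
      (by filter_upwards [hη01] with w ⟨h0, h1⟩; split_ifs <;> constructor <;> linarith)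
  set bstar : E → ℝ := fun w => if 1 / 2 ≤ η w then 1 else 0
  have hbstar : Measurable bstar :=
    Measurable.ite (measurableSet_le measurable_const hη) measurable_const measurable_const
  have hbstar01 : ∀ w, bstar w = 0 ∨ bstar w = 1 := fun w => by
    simp only [bstar]; split_ifs <;> norm_num
  rw [hcp.measureReal_comp_eq_eq_integral hY hW hY01 hηi hbstar hbstar01,
    hcp.measureReal_comp_eq_eq_integral hY hW hY01 hηi hb hb01,
    ← integral_sub (hint bstar hbstar) (hint b hb), ← integral_const_mul]
  exact congrArg _ (funext fun w => ite_sub_ite_eq_two_mul_abs_mul_abs (hb01 w))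

end IsCondProbVersion

end

/-- Tsybakov-type sufficient condition for the margin condition: if
`P(|η(W) − 1/2| ≤ t) ≤ C·t^α` for all `t > 0`, then the margin condition holds with exponent
`ϑ = (1+α)/α`: there is `h > 0` with `S̃(b*) − S̃(b) ≥ h^ϑ·(E|b*(W) − b(W)|)^ϑ` for every
measurable binary predictor `b`. -/
theorem statement8
    {Ω E : Type*} [MeasurableSpace Ω] [MeasurableSpace E]
    (μ : Measure Ω) [IsProbabilityMeasure μ]
    (Y : Ω → ℝ) (W : Ω → E) (η : E → ℝ) (C α : ℝ)
    (hY : Measurable Y) (hW : Measurable W) (hη : Measurable η)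
    (hY01 : ∀ ω, Y ω = 0 ∨ Y ω = 1)
    -- η is a version of the conditional probability of Y = 1 given W:
    (hver : ∀ A : Set E, MeasurableSet A →
      (μ {ω | Y ω = 1 ∧ W ω ∈ A}).toReal = ∫ w in A, η w ∂(Measure.map W μ))
    (hC : 0 < C) (hα : 0 < α)
    -- P(|η(W) − 1/2| ≤ t) ≤ C·t^α for all t > 0
    (hmarginP : ∀ t : ℝ, 0 < t →
      (μ {ω | |η (W ω) - 1 / 2| ≤ t}).toReal ≤ C * t ^ α) :
    ∃ h : ℝ, 0 < h ∧
      ∀ b : E → ℝ, Measurable b → (∀ w, b w = 0 ∨ b w = 1) →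
        h ^ ((1 + α) / α) * (∫ ω, |(if (1 : ℝ) / 2 ≤ η (W ω) then (1 : ℝ) else 0) - b (W ω)| ∂μ)
              ^ ((1 + α) / α)
          ≤ (μ {ω | Y ω = (if (1 : ℝ) / 2 ≤ η (W ω) then 1 else 0)}).toReal
            - (μ {ω | Y ω = b (W ω)}).toReal := by
  have hcp : IsCondProbVersion μ Y W η := hver
  have hηi : Integrable η (μ.map W) := .of_mem_Icc 0 1 hη.aemeasurable (hcp.ae_mem_Icc hW hη)
  refine ⟨(2 * C) ^ (-(1 + α)⁻¹), by positivity, fun b hb hb01 => ?_⟩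
  set g : E → ℝ := fun w => |(if 1 / 2 ≤ η w then 1 else 0) - b w|
  have hg : Measurable g :=
    ((Measurable.ite (measurableSet_le measurable_const hη) measurable_const
      measurable_const).sub hb).abs
  have hg01 : ∀ w, g w ∈ Icc 0 1 := fun w => by
    simp only [g]; rcases hb01 w with h | h <;> split_ifs <;> norm_num [h]
  have hdist : ∫ ω, |(if (1 : ℝ) / 2 ≤ η (W ω) then (1 : ℝ) else 0) - b (W ω)| ∂μ
      = ∫ w, g w ∂μ.map W := (integral_map hW.aemeasurable hg.aestronglyMeasurable).symm
  have hmargin : ∀ t, 0 < t → t * (∫ w, g w ∂μ.map W - C * t ^ α)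
      ≤ ∫ w, g w * |η w - 1 / 2| ∂μ.map W := fun t ht => by
    have hM : MeasurableSet {w | |η w - 1 / 2| ≤ t} :=
      measurableSet_le (by fun_prop) measurable_const
    calc t * (∫ w, g w ∂μ.map W - C * t ^ α)
        ≤ t * (∫ w, g w ∂μ.map W - (μ.map W).real {w | |η w - 1 / 2| ≤ t}) := by
          refine mul_le_mul_of_nonneg_left (sub_le_sub_left ?_ _) ht.le
          rw [map_measureReal_apply hW hM]
          exact hmarginP t ht
      _ ≤ ∫ w, g w * |η w - 1 / 2| ∂μ.map W :=
          mul_sub_measureReal_le_integral_mul hg hg01 (by fun_prop)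
            (hηi.sub (integrable_const _)).abs (fun _ => abs_nonneg _) ht.le
  have hpow : ((2 * C) ^ (-(1 + α)⁻¹)) ^ ((1 + α) / α) = (2 * C) ^ (-α⁻¹) := by
    rw [← rpow_mul (by positivity)]; congr 1; field_simp
  rw [hpow, hdist, ← measureReal_def, ← measureReal_def,
    hcp.measureReal_sub_measureReal_eq_integral hY hW hη hY01 hb hb01]
  exact rpow_mul_rpow_le_of_forall_mul_sub_le (integral_nonneg fun w => (hg01 w).1) hC hα
    (integral_nonneg fun _ => mul_nonneg (abs_nonneg _) (abs_nonneg _)) hmargin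
end

section
/- Let Z be a random vector in ℝ^m such that ‖Z‖ ≤ L₂ with probability 1 (Euclidean norm) and the smallest eigenvalue of the matrix E(ZZ') is bounded below by L₃ > 0. Then for every δ ∈ ℝ^m, E|Z'δ| ≥ (L₃/L₂)·‖δ‖. -/
open MeasureTheory

/-! Cauchy–Schwarz bounds `|Z'δ|` by `L₂‖δ‖` almost surely, so
`L₃‖δ‖² ≤ E(Z'δ)² ≤ L₂‖δ‖ · E|Z'δ|`; dividing by `L₂‖δ‖` gives the claim. -/

theorem Real.abs_sum_mul_le_sqrt_mul_sqrt {ι : Type*} (s : Finset ι) (f g : ι → ℝ) :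
    |∑ i ∈ s, f i * g i| ≤ √(∑ i ∈ s, f i ^ 2) * √(∑ i ∈ s, g i ^ 2) :=
  calc |∑ i ∈ s, f i * g i| = √((∑ i ∈ s, f i * g i) ^ 2) := (Real.sqrt_sq_eq_abs _).symm
    _ ≤ √((∑ i ∈ s, f i ^ 2) * ∑ i ∈ s, g i ^ 2) :=
      Real.sqrt_le_sqrt (Finset.sum_mul_sq_le_sq_mul_sq s f g)
    _ = √(∑ i ∈ s, f i ^ 2) * √(∑ i ∈ s, g i ^ 2) := Real.sqrt_mul (by positivity) _

theorem MeasureTheory.integral_sq_le_mul_integral_abs_of_ae_abs_le {Ω : Type*}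
    [MeasurableSpace Ω] {μ : Measure Ω} [IsFiniteMeasure μ] {X : Ω → ℝ}
    (hX : AEStronglyMeasurable X μ) {C : ℝ} (hC : ∀ᵐ ω ∂μ, |X ω| ≤ C) :
    ∫ ω, X ω ^ 2 ∂μ ≤ C * ∫ ω, |X ω| ∂μ := by
  have h_abs : Integrable (fun ω ↦ |X ω|) μ :=
    Integrable.of_bound hX.norm C (by simpa only [Real.norm_eq_abs, abs_abs] using hC)
  have h_sq : Integrable (fun ω ↦ X ω ^ 2) μ :=
    Integrable.of_bound (hX.pow 2) (C ^ 2) <| hC.mono fun ω hω ↦ by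
      simpa only [norm_pow, Real.norm_eq_abs] using pow_le_pow_left₀ (abs_nonneg _) hω 2
  rw [← integral_const_mul]
  refine integral_mono_ae h_sq (h_abs.const_mul C) (hC.mono fun ω hω ↦ ?_)
  calc X ω ^ 2 = |X ω| * |X ω| := by rw [← sq_abs, sq]
    _ ≤ C * |X ω| := mul_le_mul_of_nonneg_right hω (abs_nonneg _)

theorem statement15_general
    {Ω : Type*} [MeasurableSpace Ω] (μ : Measure Ω) [IsProbabilityMeasure μ]
    (m : ℕ) (Z : Ω → Fin m → ℝ) (hZ : Measurable Z)
    (L₂ L₃ : ℝ) (hL₂ : 0 < L₂)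
    -- ‖Z‖ ≤ L₂ with probability one (Euclidean norm):
    (hbdd : ∀ᵐ ω ∂μ, Real.sqrt (∑ j, (Z ω j) ^ 2) ≤ L₂)
    -- the smallest eigenvalue of E(ZZ') is bounded below by L₃:
    (heig : ∀ δ : Fin m → ℝ, L₃ * ∑ j, (δ j) ^ 2 ≤ ∫ ω, (∑ j, Z ω j * δ j) ^ 2 ∂μ) :
    ∀ δ : Fin m → ℝ,
      (L₃ / L₂) * Real.sqrt (∑ j, (δ j) ^ 2) ≤ ∫ ω, |∑ j, Z ω j * δ j| ∂μ := by
  intro δ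
  set s := √(∑ j, δ j ^ 2)
  have hX_meas : AEStronglyMeasurable (fun ω ↦ ∑ j, Z ω j * δ j) μ := by fun_prop
  have hX_bdd : ∀ᵐ ω ∂μ, |∑ j, Z ω j * δ j| ≤ L₂ * s := hbdd.mono fun ω hω ↦
    (Real.abs_sum_mul_le_sqrt_mul_sqrt _ _ _).trans
      (mul_le_mul_of_nonneg_right hω (Real.sqrt_nonneg _))
  have h_key : L₃ * s * s ≤ L₂ * s * ∫ ω, |∑ j, Z ω j * δ j| ∂μ :=
    calc L₃ * s * s = L₃ * ∑ j, δ j ^ 2 := by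
          rw [mul_assoc, Real.mul_self_sqrt (by positivity)]
      _ ≤ _ := heig δ
      _ ≤ _ := integral_sq_le_mul_integral_abs_of_ae_abs_le hX_meas hX_bdd
  rcases (show 0 ≤ s from Real.sqrt_nonneg _).eq_or_lt with hs | hs
  · rw [← hs, mul_zero]
    exact integral_nonneg fun ω ↦ abs_nonneg _
  · rw [div_mul_eq_mul_div, div_le_iff₀ hL₂, mul_comm _ L₂]
    exact le_of_mul_le_mul_right (by linarith) hs

/-- if `‖Z‖ ≤ L₂` almost surely and the smallest eigenvalue of `E(ZZ')` is at
least `L₃ > 0`, then `E|Z'δ| ≥ (L₃/L₂)·‖δ‖` for every `δ ∈ ℝ^m`. -/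
theorem statement15
    {Ω : Type*} [MeasurableSpace Ω] (μ : Measure Ω) [IsProbabilityMeasure μ]
    (m : ℕ) (Z : Ω → Fin m → ℝ) (hZ : Measurable Z)
    (L₂ L₃ : ℝ) (hL₂ : 0 < L₂) (hL₃ : 0 < L₃)
    -- ‖Z‖ ≤ L₂ with probability one (Euclidean norm):
    (hbdd : ∀ᵐ ω ∂μ, Real.sqrt (∑ j, (Z ω j) ^ 2) ≤ L₂)
    -- the smallest eigenvalue of E(ZZ') is bounded below by L₃:
    (heig : ∀ δ : Fin m → ℝ, L₃ * ∑ j, (δ j) ^ 2 ≤ ∫ ω, (∑ j, Z ω j * δ j) ^ 2 ∂μ) :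
    ∀ δ : Fin m → ℝ,
      (L₃ / L₂) * Real.sqrt (∑ j, (δ j) ^ 2) ≤ ∫ ω, |∑ j, Z ω j * δ j| ∂μ :=
  statement15_general μ m Z hZ L₂ L₃ hL₂ hbdd heig
end

section
/- Let σ > 0 and suppose M_σ ≥ 1, s ≥ 1, and max(p,n) ≥ 3, and let r_n = max(s·ln(max(p,n)), 1). If 4·[ln s + ln(ln(max(p,n))) + ln M_σ] ≤ (1/2)·ln(max(p,n)), then (4s+4)·ln(M_σ·r_n) ≤ r_n + (6s+5)·ln 2; that is, the sufficient condition (suff condition on r_n) implies the condition required for the non-asymptotic tail bound of Theorem 1. -/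
open Real

noncomputable section

lemma one_le_log_of_three_le {x : ℝ} (hx : 3 ≤ x) : 1 ≤ Real.log x := by
  rw [Real.le_log_iff_exp_le (by linarith)]
  exact exp_one_lt_three.le.trans hx

lemma rN_eq_mul_log {s p n : ℕ} (hs : 1 ≤ s) (hpn : 3 ≤ max p n) :
    rN s p n = s * Real.log (max (p : ℝ) (n : ℝ)) := by
  have hL : 1 ≤ Real.log (max (p : ℝ) (n : ℝ)) :=
    one_le_log_of_three_le (by exact_mod_cast hpn)
  have hs' : (1 : ℝ) ≤ s := by exact_mod_cast hs
  exact max_eq_left (by nlinarith)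

lemma mul_log_mul_le_of_log_le {s L M c : ℝ} (hs : 1 ≤ s) (hL : 0 < L) (hM : 0 < M)
    (hc : 0 ≤ c) (h : 4 * (Real.log s + Real.log L + Real.log M) ≤ L / 2) :
    (4 * s + 4) * Real.log (M * (s * L)) ≤ s * L + c := by
  have hlog : Real.log (M * (s * L)) = Real.log s + Real.log L + Real.log M := by
    rw [Real.log_mul hM.ne' (by positivity), Real.log_mul (by positivity) hL.ne']
    ring
  calc (4 * s + 4) * Real.log (M * (s * L))
      = (s + 1) * (4 * (Real.log s + Real.log L + Real.log M)) := by rw [hlog]; ring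
    _ ≤ (s + 1) * (L / 2) := by gcongr
    _ ≤ s * L + c := by nlinarith

theorem statement17_general
    (M : ℝ) (hM : 1 ≤ M)
    (s p n : ℕ) (hs : 1 ≤ s) (hpn : 3 ≤ max p n)
    (hsuff : 4 * (Real.log (s : ℝ) + Real.log (Real.log (max (p : ℝ) (n : ℝ))) + Real.log M)
        ≤ (1 / 2) * Real.log (max (p : ℝ) (n : ℝ))) :
    ((4 * s + 4 : ℕ) : ℝ) * Real.log (M * rN s p n)
      ≤ rN s p n + ((6 * s + 5 : ℕ) : ℝ) * Real.log 2 := by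
  have hL : 0 < Real.log (max (p : ℝ) (n : ℝ)) :=
    one_pos.trans_le (one_le_log_of_three_le (by exact_mod_cast hpn))
  rw [rN_eq_mul_log hs hpn]
  push_cast
  exact mul_log_mul_le_of_log_le (by exact_mod_cast hs) hL (by linarith)
    (by positivity) (by linarith)

/-- the sufficient condition
`4·[ln s + ln(ln(p ∨ n)) + ln M_σ] ≤ (1/2)·ln(p ∨ n)` implies the condition
`(4s+4)·ln(M_σ·r_n) ≤ r_n + (6s+5)·ln 2` required for the tail bound of Theorem 1. -/
theorem statement17
    (σ : ℝ) (hσ : 0 < σ) (M : ℝ) (hM : 1 ≤ M)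
    (s p n : ℕ) (hs : 1 ≤ s) (hpn : 3 ≤ max p n)
    (hsuff : 4 * (Real.log (s : ℝ) + Real.log (Real.log (max (p : ℝ) (n : ℝ))) + Real.log M)
        ≤ (1 / 2) * Real.log (max (p : ℝ) (n : ℝ))) :
    ((4 * s + 4 : ℕ) : ℝ) * Real.log (M * rN s p n)
      ≤ rN s p n + ((6 * s + 5 : ℕ) : ℝ) * Real.log 2 :=
  statement17_general M hM s p n hs hpn hsuff

end
end
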